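/- arXiv:1511.08555 — 4 statements merged into one kernel-verified Lean document; each statement's English description precedes it below -/
import Mathlib

section
/- The limit as n → ∞ of (n+1)^2 * (2/n^2 + sum_{k=1}^{n-1} 1/(k*(n-k))^2) equals 2 + π^2/3. -/
open Filter Finset Real

-- reflection lemma
lemma refl_sum (n : ℕ) (hn : 1 ≤ n) (f : ℝ → ℝ) :
    ∑ k ∈ Finset.Icc 1 (n - 1), f ((n : ℝ) - (k : ℝ)) = ∑ k ∈ Finset.Icc 1 (n - 1), f k := by
  apply Finset.sum_nbij' (fun k => n - k) (fun k => n - k)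
  · intro a ha
    simp only [Finset.mem_Icc] at ha ⊢
    omega
  · intro a ha
    simp only [Finset.mem_Icc] at ha ⊢
    omega
  · intro a ha
    simp only [Finset.mem_Icc] at ha
    omega
  · intro a ha
    simp only [Finset.mem_Icc] at ha
    omega
  · intro a ha
    simp only [Finset.mem_Icc] at ha
    congr 1
    have : a ≤ n := by omega
    push_cast [Nat.cast_sub this]
    ring

lemma key_id (n : ℕ) (hn : 1 ≤ n) :
    2 / (n : ℝ) ^ 2
      + ∑ k ∈ Finset.Icc 1 (n - 1), (1 : ℝ) / ((k : ℝ) * ((n : ℝ) - (k : ℝ))) ^ 2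
    = 2 / (n : ℝ) ^ 2 * (1 + ∑ k ∈ Finset.Icc 1 (n - 1), 1 / (k : ℝ) ^ 2)
      + 4 / (n : ℝ) ^ 3 * ∑ k ∈ Finset.Icc 1 (n - 1), 1 / (k : ℝ) := by
  have hn0 : (n : ℝ) ≠ 0 := by
    exact_mod_cast Nat.one_le_iff_ne_zero.mp hn
  have hterm : ∀ k ∈ Finset.Icc 1 (n - 1),
      (1 : ℝ) / ((k : ℝ) * ((n : ℝ) - (k : ℝ))) ^ 2
      = 1 / (n : ℝ) ^ 2 * (1 / (k : ℝ) ^ 2)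
        + 1 / (n : ℝ) ^ 2 * (1 / ((n : ℝ) - (k : ℝ)) ^ 2)
        + 2 / (n : ℝ) ^ 3 * (1 / (k : ℝ))
        + 2 / (n : ℝ) ^ 3 * (1 / ((n : ℝ) - (k : ℝ))) := by
    intro k hk
    simp only [Finset.mem_Icc] at hk
    have hk1 : (1 : ℝ) ≤ (k : ℝ) := by exact_mod_cast hk.1
    have hkn : (k : ℝ) + 1 ≤ (n : ℝ) := by exact_mod_cast (by omega : k + 1 ≤ n)
    have h1 : (k : ℝ) ≠ 0 := by linarith
    have h2 : (n : ℝ) - (k : ℝ) ≠ 0 := by linarith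
    field_simp
    ring
  rw [Finset.sum_congr rfl hterm]
  rw [Finset.sum_add_distrib, Finset.sum_add_distrib, Finset.sum_add_distrib]
  rw [← Finset.mul_sum, ← Finset.mul_sum, ← Finset.mul_sum, ← Finset.mul_sum]
  rw [refl_sum n hn (fun x => 1 / x ^ 2), refl_sum n hn (fun x => 1 / x)]
  ring

lemma icc_eq_range (n : ℕ) (hn : 1 ≤ n) :
    ∑ k ∈ Finset.Icc 1 (n - 1), (1 : ℝ) / (k : ℝ) ^ 2
      = ∑ k ∈ Finset.range n, (1 : ℝ) / (k : ℝ) ^ 2 := by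
  rw [Finset.range_eq_Ico, Finset.sum_eq_sum_Ico_succ_bot (by omega : 0 < n)]
  rw [show n = (n - 1) + 1 by omega, Finset.Ico_add_one_right_eq_Icc]
  norm_num

lemma H_le (n : ℕ) :
    ∑ k ∈ Finset.Icc 1 (n - 1), (1 : ℝ) / (k : ℝ) ≤ 1 + Real.log n := by
  calc ∑ k ∈ Finset.Icc 1 (n - 1), (1 : ℝ) / (k : ℝ)
      ≤ ∑ k ∈ Finset.Icc 1 n, (1 : ℝ) / (k : ℝ) := by
        apply Finset.sum_le_sum_of_subset_of_nonneg
        · exact Finset.Icc_subset_Icc_right (by omega)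
        · intro i _ _; positivity
    _ = (harmonic n : ℝ) := by
        rw [harmonic_eq_sum_Icc]; push_cast; simp [one_div]
    _ ≤ 1 + Real.log n := harmonic_le_one_add_log n

lemma tendsto_H_div : Tendsto
    (fun n : ℕ => (∑ k ∈ Finset.Icc 1 (n - 1), (1 : ℝ) / (k : ℝ)) / (n : ℝ))
    atTop (nhds 0) := by
  have hlog : Tendsto (fun n : ℕ => Real.log n / (n : ℝ)) atTop (nhds 0) :=
    (Real.isLittleO_log_id_atTop.tendsto_div_nhds_zero).comp tendsto_natCast_atTop_atTop
  have hone : Tendsto (fun n : ℕ => (1 : ℝ) / (n : ℝ)) atTop (nhds 0) :=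
    tendsto_one_div_atTop_nhds_zero_nat
  have hup : Tendsto (fun n : ℕ => (1 + Real.log n) / (n : ℝ)) atTop (nhds 0) := by
    have := hone.add hlog
    rw [add_zero] at this
    refine this.congr fun n => ?_
    ring
  refine tendsto_of_tendsto_of_tendsto_of_le_of_le' tendsto_const_nhds hup ?_ ?_
  · filter_upwards [eventually_ge_atTop 1] with n hn
    have : (0:ℝ) < n := by exact_mod_cast hn
    positivity
  · filter_upwards [eventually_ge_atTop 1] with n hn
    have hn0 : (0:ℝ) < n := by exact_mod_cast hn
    gcongr
    exact H_le n

open Filter in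
theorem limit_g :
    Tendsto (fun n : ℕ =>
        ((n : ℝ) + 1) ^ 2 * (2 / (n : ℝ) ^ 2
          + ∑ k ∈ Finset.Icc 1 (n - 1), (1 : ℝ) / ((k : ℝ) * ((n : ℝ) - (k : ℝ))) ^ 2))
      atTop (nhds (2 + Real.pi ^ 2 / 3)) := by
  have hQ : Tendsto (fun n : ℕ => ((n : ℝ) + 1) / (n : ℝ)) atTop (nhds 1) := by
    have h1 : Tendsto (fun n : ℕ => 1 + 1 / (n : ℝ)) atTop (nhds 1) := by
      have := (tendsto_const_nhds : Tendsto (fun _ : ℕ => (1:ℝ)) atTop (nhds 1)).add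
        tendsto_one_div_atTop_nhds_zero_nat
      simpa using this
    refine h1.congr' ?_
    filter_upwards [eventually_ge_atTop 1] with n hn
    have hn0 : (n : ℝ) ≠ 0 := by
      exact_mod_cast Nat.one_le_iff_ne_zero.mp hn
    field_simp
  have hA : Tendsto (fun n : ℕ => ∑ k ∈ Finset.range n, (1 : ℝ) / (k : ℝ) ^ 2)
      atTop (nhds (Real.pi ^ 2 / 6)) := hasSum_zeta_two.tendsto_sum_nat
  have hmain : Tendsto (fun n : ℕ =>
      2 * (((n : ℝ) + 1) / (n : ℝ)) ^ 2 * (1 + ∑ k ∈ Finset.range n, (1 : ℝ) / (k : ℝ) ^ 2)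
      + 4 * (((n : ℝ) + 1) / (n : ℝ)) ^ 2
        * ((∑ k ∈ Finset.Icc 1 (n - 1), (1 : ℝ) / (k : ℝ)) / (n : ℝ)))
      atTop (nhds (2 * 1 ^ 2 * (1 + Real.pi ^ 2 / 6) + 4 * 1 ^ 2 * 0)) := by
    exact ((tendsto_const_nhds.mul (hQ.pow 2)).mul (tendsto_const_nhds.add hA)).add
      ((tendsto_const_nhds.mul (hQ.pow 2)).mul tendsto_H_div)
  have : (2 * 1 ^ 2 * (1 + Real.pi ^ 2 / 6) + 4 * 1 ^ 2 * 0 : ℝ) = 2 + Real.pi ^ 2 / 3 := by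
    ring
  rw [this] at hmain
  refine hmain.congr' ?_
  filter_upwards [eventually_ge_atTop 1] with n hn
  have hn0 : (n : ℝ) ≠ 0 := by
    exact_mod_cast Nat.one_le_iff_ne_zero.mp hn
  rw [← icc_eq_range n hn, key_id n hn]
  field_simp
end

section
/- For all integers n ≥ 37, 2/n^2 + sum_{k=1}^{n-1} 1/(k*(n-k))^2 < 6/(n+1)^2. -/
open Finset

lemma reflect_sum (n : ℕ) (f : ℝ → ℝ) :
    ∑ k ∈ Finset.Icc 1 (n-1), f ((n:ℝ) - (k:ℝ)) = ∑ k ∈ Finset.Icc 1 (n-1), f (k:ℝ) := by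
  refine Finset.sum_nbij' (fun k => n - k) (fun k => n - k) ?_ ?_ ?_ ?_ ?_ <;>
    intro a ha <;> simp only [Finset.mem_Icc] at * <;> try omega
  have h1 : 1 ≤ a := ha.1
  have h2 : a ≤ n - 1 := ha.2
  have : ((n - a : ℕ) : ℝ) = (n : ℝ) - (a : ℝ) := by
    have : a ≤ n := by omega
    push_cast [this]; ring
  rw [this]

lemma icc_insert (n : ℕ) (hn : 2 ≤ n) :
    Finset.Icc 1 n = insert n (Finset.Icc 1 (n-1)) := by
  ext x; simp only [Finset.mem_Icc, Finset.mem_insert]; omega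

lemma S2_bound (n : ℕ) (hn : 37 ≤ n) :
    ∑ k ∈ Finset.Icc 1 (n-1), (1:ℝ)/(k:ℝ)^2 ≤ 164533/100000 - 1/((n:ℝ)-1) := by
  induction n, hn using Nat.le_induction with
  | base =>
      norm_num [Finset.sum_Icc_succ_top]
  | succ n hn ih =>
      have h1 : Finset.Icc 1 ((n+1)-1) = insert n (Finset.Icc 1 (n-1)) := by
        simpa using icc_insert n (by omega)
      rw [h1, Finset.sum_insert (by simp [Finset.mem_Icc]; omega)]
      have hN : (37:ℝ) ≤ (n:ℝ) := by exact_mod_cast hn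
      have key : (1:ℝ)/(n:ℝ)^2 ≤ 1/((n:ℝ)-1) - 1/(n:ℝ) := by
        rw [div_sub_div _ _ (by nlinarith) (by nlinarith)]
        rw [div_le_div_iff₀ (by positivity) (by nlinarith)]
        ring_nf; nlinarith
      push_cast
      rw [show ((n:ℝ)+1-1) = (n:ℝ) from by ring]
      linarith [ih]

lemma H_bound (n : ℕ) (hn : 37 ≤ n) :
    ∑ k ∈ Finset.Icc 1 (n-1), (1:ℝ)/(k:ℝ) ≤ (112827/1000000) * (n:ℝ) := by
  induction n, hn using Nat.le_induction with
  | base =>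
      norm_num [Finset.sum_Icc_succ_top]
  | succ n hn ih =>
      have h1 : Finset.Icc 1 ((n+1)-1) = insert n (Finset.Icc 1 (n-1)) := by
        simpa using icc_insert n (by omega)
      rw [h1, Finset.sum_insert (by simp [Finset.mem_Icc]; omega)]
      have hN : (37:ℝ) ≤ (n:ℝ) := by exact_mod_cast hn
      have key : (1:ℝ)/(n:ℝ) ≤ 112827/1000000 := by
        rw [div_le_iff₀ (by linarith)]; nlinarith
      push_cast
      linarith [ih]

theorem upper_bound_37 (n : ℕ) (hn : 37 ≤ n) :
    2 / (n : ℝ) ^ 2 + ∑ k ∈ Finset.Icc 1 (n - 1), (1 : ℝ) / ((k : ℝ) * ((n : ℝ) - (k : ℝ))) ^ 2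
      < 6 / ((n : ℝ) + 1) ^ 2 := by
  have hN : (37:ℝ) ≤ (n:ℝ) := by exact_mod_cast hn
  have hn0 : (0:ℝ) < (n:ℝ) := by linarith
  have hterm : ∀ k ∈ Finset.Icc 1 (n-1),
      (1 : ℝ) / ((k : ℝ) * ((n : ℝ) - (k : ℝ))) ^ 2
        = (1/(n:ℝ)^2) * (1/(k:ℝ)^2 + 1/((n:ℝ)-(k:ℝ))^2)
          + (2/(n:ℝ)^3) * (1/(k:ℝ) + 1/((n:ℝ)-(k:ℝ))) := by
    intro k hk
    simp only [Finset.mem_Icc] at hk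
    have hk1 : (1:ℝ) ≤ (k:ℝ) := by exact_mod_cast hk.1
    have hk2 : (k:ℝ) ≤ (n:ℝ) - 1 := by
      have h' : (k:ℝ) ≤ ((n-1:ℕ):ℝ) := by exact_mod_cast hk.2
      have hc : ((n-1:ℕ):ℝ) = (n:ℝ) - 1 := by
        have h1 : 1 ≤ n := by omega
        push_cast [h1]; ring
      linarith [hc ▸ h']
    have hkpos : (0:ℝ) < (k:ℝ) := by linarith
    have hnk : (0:ℝ) < (n:ℝ) - (k:ℝ) := by linarith
    field_simp
    ring
  have r1 : ∑ k ∈ Finset.Icc 1 (n-1), (1:ℝ)/((n:ℝ)-(k:ℝ))^2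
      = ∑ k ∈ Finset.Icc 1 (n-1), (1:ℝ)/(k:ℝ)^2 := reflect_sum n (fun x => 1/x^2)
  have r2 : ∑ k ∈ Finset.Icc 1 (n-1), (1:ℝ)/((n:ℝ)-(k:ℝ))
      = ∑ k ∈ Finset.Icc 1 (n-1), (1:ℝ)/(k:ℝ) := reflect_sum n (fun x => 1/x)
  rw [Finset.sum_congr rfl hterm, Finset.sum_add_distrib, ← Finset.mul_sum, ← Finset.mul_sum,
    Finset.sum_add_distrib, Finset.sum_add_distrib, r1, r2]
  have hS2 := S2_bound n hn
  have hH := H_bound n hn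
  set S2 : ℝ := ∑ k ∈ Finset.Icc 1 (n-1), (1:ℝ)/(k:ℝ)^2 with hS2def
  set H : ℝ := ∑ k ∈ Finset.Icc 1 (n-1), (1:ℝ)/(k:ℝ) with hHdef
  have h1 : (0:ℝ) < 1/(n:ℝ)^2 := by positivity
  have h2 : (0:ℝ) < 2/(n:ℝ)^3 := by positivity
  have hm1 : (0:ℝ) < (n:ℝ) - 1 := by linarith
  have key : 2/(n:ℝ)^2 + (1/(n:ℝ)^2) * (2 * (164533/100000 - 1/((n:ℝ)-1)))
      + (2/(n:ℝ)^3) * (2 * ((112827/1000000) * (n:ℝ))) < 6/((n:ℝ)+1)^2 := by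
    have heq : 2/(n:ℝ)^2 + (1/(n:ℝ)^2) * (2 * (164533/100000 - 1/((n:ℝ)-1)))
        + (2/(n:ℝ)^3) * (2 * ((112827/1000000) * (n:ℝ)))
        = (2*(n:ℝ)*((n:ℝ)-1) + (2*(164533/100000)*((n:ℝ)-1)-2)*(n:ℝ)
            + 4*(112827/1000000)*(n:ℝ)*((n:ℝ)-1)) / ((n:ℝ)^3*((n:ℝ)-1)) := by
      field_simp
      ring
    rw [heq, div_lt_div_iff₀ (by positivity) (by positivity)]
    have hM : (0:ℝ) ≤ (n:ℝ) - 37 := by linarith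
    nlinarith [mul_nonneg (mul_nonneg hM hM) hM, mul_nonneg hM hM, hM]
  have b1 : (1/(n:ℝ)^2) * (S2 + S2) ≤ (1/(n:ℝ)^2) * (2 * (164533/100000 - 1/((n:ℝ)-1))) :=
    mul_le_mul_of_nonneg_left (by linarith) (le_of_lt h1)
  have b2 : (2/(n:ℝ)^3) * (H + H) ≤ (2/(n:ℝ)^3) * (2 * ((112827/1000000) * (n:ℝ))) :=
    mul_le_mul_of_nonneg_left (by linarith) (le_of_lt h2)
  linarith
end

section
/- For all integers n ≥ 37, (2 + π^2/3)/(n+1)^2 < 2/n^2 + sum_{k=1}^{n-1} 1/(k*(n-k))^2. -/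
open Finset Real

private lemma telescope_bound (m N : ℕ) (hm : 1 ≤ m) :
    ∑ i ∈ range N, (1:ℝ) / ((i:ℝ) + (m:ℝ) + 1) ^ 2 ≤ 1 / (m:ℝ) := by
  have hm' : (1:ℝ) ≤ (m:ℝ) := by exact_mod_cast hm
  have step : ∀ i ∈ range N, (1:ℝ) / ((i:ℝ) + (m:ℝ) + 1) ^ 2 ≤
      (1:ℝ) / ((i:ℝ) + (m:ℝ)) - 1 / ((i:ℝ) + 1 + (m:ℝ)) := by
    intro i _
    have hi : (0:ℝ) ≤ (i:ℝ) := Nat.cast_nonneg i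
    have ha : (1:ℝ) ≤ (i:ℝ) + (m:ℝ) := by linarith
    have ha0 : (0:ℝ) < (i:ℝ) + (m:ℝ) := by linarith
    have hb0 : (0:ℝ) < (i:ℝ) + 1 + (m:ℝ) := by linarith
    have e : (1:ℝ) / ((i:ℝ) + (m:ℝ)) - 1 / ((i:ℝ) + 1 + (m:ℝ))
        = 1 / (((i:ℝ) + (m:ℝ)) * ((i:ℝ) + (m:ℝ) + 1)) := by
      rw [div_sub_div _ _ ha0.ne' hb0.ne',
        show (1:ℝ) * ((i:ℝ) + 1 + (m:ℝ)) - ((i:ℝ) + (m:ℝ)) * 1 = 1 by ring,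
        show ((i:ℝ) + (m:ℝ)) * ((i:ℝ) + 1 + (m:ℝ)) = ((i:ℝ) + (m:ℝ)) * ((i:ℝ) + (m:ℝ) + 1) by ring]
    rw [e]
    apply one_div_le_one_div_of_le (by positivity)
    nlinarith
  calc ∑ i ∈ range N, (1:ℝ) / ((i:ℝ) + (m:ℝ) + 1) ^ 2
      ≤ ∑ i ∈ range N, ((1:ℝ) / ((i:ℝ) + (m:ℝ)) - 1 / ((i:ℝ) + 1 + (m:ℝ))) :=
        Finset.sum_le_sum step
    _ = 1 / ((0:ℝ) + (m:ℝ)) - 1 / ((N:ℝ) + (m:ℝ)) := by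
        have := Finset.sum_range_sub' (fun i : ℕ => (1:ℝ) / ((i:ℝ) + (m:ℝ))) N
        simpa [Nat.cast_add, Nat.cast_one] using this
    _ ≤ 1 / (m:ℝ) := by
        have : (0:ℝ) ≤ 1 / ((N:ℝ) + (m:ℝ)) := by positivity
        simp only [zero_add]; linarith

private lemma partial_basel (m : ℕ) (hm : 1 ≤ m) :
    Real.pi ^ 2 / 6 - 1 / (m:ℝ) ≤ ∑ k ∈ Icc 1 m, (1:ℝ) / (k:ℝ) ^ 2 := by
  have hs := hasSum_zeta_two
  have hsum : Summable fun n : ℕ => (1:ℝ) / (n:ℝ) ^ 2 := hs.summable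
  have key := Summable.sum_add_tsum_nat_add (f := fun n : ℕ => (1:ℝ) / (n:ℝ) ^ 2) (m + 1) hsum
  rw [hs.tsum_eq] at key
  have hrange : ∑ i ∈ range (m + 1), (1:ℝ) / (i:ℝ) ^ 2
      = ∑ k ∈ Icc 1 m, (1:ℝ) / (k:ℝ) ^ 2 := by
    have : range (m + 1) = insert 0 (Icc 1 m) := by
      ext x; simp [Nat.lt_succ_iff]; omega
    rw [this, Finset.sum_insert (by simp)]
    norm_num
  have htail : ∑' i : ℕ, (1:ℝ) / ((i + (m + 1) : ℕ):ℝ) ^ 2 ≤ 1 / (m:ℝ) := by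
    have hsum' : Summable fun i : ℕ => (1:ℝ) / ((i + (m + 1) : ℕ):ℝ) ^ 2 :=
      (summable_nat_add_iff (f := fun n : ℕ => (1:ℝ) / (n:ℝ) ^ 2) (m + 1)).2 hsum
    apply Summable.tsum_le_of_sum_le hsum'
    intro s
    obtain ⟨N, hN⟩ := s.exists_nat_subset_range
    calc ∑ i ∈ s, (1:ℝ) / ((i + (m + 1) : ℕ):ℝ) ^ 2
        ≤ ∑ i ∈ range N, (1:ℝ) / ((i + (m + 1) : ℕ):ℝ) ^ 2 := by
          apply Finset.sum_le_sum_of_subset_of_nonneg hN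
          intro i _ _; positivity
      _ = ∑ i ∈ range N, (1:ℝ) / ((i:ℝ) + (m:ℝ) + 1) ^ 2 := by
          apply Finset.sum_congr rfl; intro i _; push_cast; ring_nf
      _ ≤ 1 / (m:ℝ) := telescope_bound m N hm
  rw [hrange] at key
  push_cast at key htail
  linarith

theorem lower_bound_37 (n : ℕ) (hn : 37 ≤ n) :
    (2 + Real.pi ^ 2 / 3) / ((n : ℝ) + 1) ^ 2
      < 2 / (n : ℝ) ^ 2 + ∑ k ∈ Finset.Icc 1 (n - 1), (1 : ℝ) / ((k : ℝ) * ((n : ℝ) - (k : ℝ))) ^ 2 := by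
  have hx : (37:ℝ) ≤ (n:ℝ) := by exact_mod_cast hn
  set x : ℝ := (n:ℝ) with hxdef
  have hx0 : (0:ℝ) < x := by linarith
  have hx1 : (0:ℝ) < x - 1 := by linarith
  set p : ℝ := Real.pi ^ 2 with hpdef
  have hp9 : (9:ℝ) ≤ p := by
    have := Real.pi_gt_three
    nlinarith
  have hreindex : ∑ k ∈ Icc 1 (n - 1), (1:ℝ) / (x - (k:ℝ)) ^ 2
      = ∑ k ∈ Icc 1 (n - 1), (1:ℝ) / (k:ℝ) ^ 2 := by
    apply Finset.sum_nbij' (fun k => n - k) (fun k => n - k)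
    · intro a ha; simp only [Finset.mem_Icc] at *; omega
    · intro a ha; simp only [Finset.mem_Icc] at *; omega
    · intro a ha; simp only [Finset.mem_Icc] at ha; omega
    · intro a ha; simp only [Finset.mem_Icc] at ha; omega
    · intro a ha
      simp only [Finset.mem_Icc] at ha
      have hcast : ((n - a : ℕ) : ℝ) = x - (a:ℝ) := by
        rw [hxdef]; push_cast [Nat.cast_sub (by omega : a ≤ n)]; ring
      rw [hcast]
  have hterm : ∀ k ∈ Icc 1 (n - 1),
      1 / x ^ 2 * (1 / (k:ℝ) ^ 2 + 1 / (x - (k:ℝ)) ^ 2)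
        ≤ (1:ℝ) / ((k:ℝ) * (x - (k:ℝ))) ^ 2 := by
    intro k hk
    simp only [Finset.mem_Icc] at hk
    have ha : (1:ℝ) ≤ (k:ℝ) := by exact_mod_cast hk.1
    have hb : (1:ℝ) ≤ x - (k:ℝ) := by
      have : (k:ℝ) ≤ ((n - 1 : ℕ):ℝ) := by exact_mod_cast hk.2
      rw [Nat.cast_sub (by omega)] at this
      push_cast at this
      rw [hxdef]; linarith
    have ha0 : (0:ℝ) < (k:ℝ) := by linarith
    have hb0 : (0:ℝ) < x - (k:ℝ) := by linarith
    rw [div_add_div _ _ (by positivity) (by positivity), div_mul_div_comm,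
      div_le_div_iff₀ (by positivity) (by positivity)]
    nlinarith [mul_pos ha0 hb0, sq_nonneg ((k:ℝ) * (x - (k:ℝ))),
      mul_pos (mul_pos ha0 hb0) (mul_pos ha0 hb0)]
  have hSsum : (2 / x ^ 2) * ∑ k ∈ Icc 1 (n - 1), (1:ℝ) / (k:ℝ) ^ 2
      ≤ ∑ k ∈ Icc 1 (n - 1), (1:ℝ) / ((k:ℝ) * (x - (k:ℝ))) ^ 2 := by
    have expand : ∑ k ∈ Icc 1 (n - 1), 1 / x ^ 2 * (1 / (k:ℝ) ^ 2 + 1 / (x - (k:ℝ)) ^ 2)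
        = (2 / x ^ 2) * ∑ k ∈ Icc 1 (n - 1), (1:ℝ) / (k:ℝ) ^ 2 := by
      simp_rw [mul_add, Finset.sum_add_distrib, ← Finset.mul_sum, hreindex]
      ring
    rw [← expand]
    exact Finset.sum_le_sum hterm
  have hm1 : 1 ≤ n - 1 := by omega
  have hH := partial_basel (n - 1) hm1
  have hcastm : ((n - 1 : ℕ):ℝ) = x - 1 := by
    rw [hxdef, Nat.cast_sub (by omega)]; norm_num
  rw [hcastm] at hH
  have hnum : (2 + p / 3) * x ^ 2 * (x - 1)
      < (2 + p / 3) * (x - 1) * (x + 1) ^ 2 - 2 * (x + 1) ^ 2 := by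
    nlinarith [mul_nonneg (sub_nonneg.2 hp9) (by nlinarith : (0:ℝ) ≤ (x-1)*(2*x+1))]
  have key : (2 + p / 3) / (x + 1) ^ 2
      < 2 / x ^ 2 + (2 / x ^ 2) * (p / 6 - 1 / (x - 1)) := by
    have e : 2 / x ^ 2 + (2 / x ^ 2) * (p / 6 - 1 / (x - 1)) - (2 + p / 3) / (x + 1) ^ 2
        = ((2 + p / 3) * (x - 1) * (x + 1) ^ 2 - 2 * (x + 1) ^ 2
            - (2 + p / 3) * x ^ 2 * (x - 1)) / (x ^ 2 * (x - 1) * (x + 1) ^ 2) := by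
      field_simp
      ring
    have hpos : 0 < 2 / x ^ 2 + (2 / x ^ 2) * (p / 6 - 1 / (x - 1)) - (2 + p / 3) / (x + 1) ^ 2 := by
      rw [e]; exact div_pos (by linarith) (by positivity)
    linarith
  have hH2 : (2 / x ^ 2) * (p / 6 - 1 / (x - 1))
      ≤ (2 / x ^ 2) * ∑ k ∈ Icc 1 (n - 1), (1:ℝ) / (k:ℝ) ^ 2 := by
    apply mul_le_mul_of_nonneg_left _ (by positivity)
    rw [hpdef]; linarith
  linarith [key, hH2, hSsum]
end

section
/- For all n ≥ 2 there is no constant M > 0 making the induction with exponent r = 1 work: specifically, for every M > 0 there exists n such that 2/n + sum_{k=1}^{n-1} 1/(k*(n-k)) > M/(n+1). -/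
open Finset Filter

theorem r_one_fails (M : ℝ) (hM : 0 < M) :
    ∃ n : ℕ, 2 ≤ n ∧
      2 / (n : ℝ) + ∑ k ∈ Finset.Icc 1 (n - 1), (1 : ℝ) / ((k : ℝ) * ((n : ℝ) - (k : ℝ)))
        > M / ((n : ℝ) + 1) := by
  obtain ⟨m, hm1, hmM⟩ :=
    ((eventually_ge_atTop 1).and
      (Real.tendsto_sum_range_one_div_nat_succ_atTop.eventually_ge_atTop M)).exists
  refine ⟨m + 1, by omega, ?_⟩
  have hn : (2:ℝ) ≤ (m:ℝ) + 1 := by exact_mod_cast Nat.succ_le_succ hm1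
  have hnpos : (0:ℝ) < (m:ℝ) + 1 := by linarith
  have hIcc : ∑ k ∈ Finset.Icc 1 m, (1:ℝ) / (k:ℝ) =
      ∑ i ∈ Finset.range m, 1 / ((i:ℝ) + 1) := by
    rw [show Finset.Icc 1 m = Finset.Ico 1 (m+1) by rfl, Finset.sum_Ico_eq_sum_range]
    simp [add_comm]
  have hS : M ≤ ∑ k ∈ Finset.Icc 1 m, (1:ℝ) / (k:ℝ) := by rw [hIcc]; exact hmM
  have hterm : ∀ k ∈ Finset.Icc 1 m,
      (1 / ((m:ℝ) + 1)) * (1 / (k:ℝ)) ≤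
        (1:ℝ) / ((k:ℝ) * (((m:ℕ) + 1 : ℕ) - (k:ℝ))) := by
    intro k hk
    rw [Finset.mem_Icc] at hk
    have hk1 : (1:ℝ) ≤ (k:ℝ) := by exact_mod_cast hk.1
    have hkm : (k:ℝ) ≤ (m:ℝ) := by exact_mod_cast hk.2
    have h1 : (1:ℝ) ≤ ((m:ℕ) + 1 : ℕ) - (k:ℝ) := by push_cast; linarith
    have h2 : (((m:ℕ) + 1 : ℕ) : ℝ) - (k:ℝ) ≤ (m:ℝ) + 1 := by push_cast; linarith
    rw [one_div_mul_one_div_rev]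
    have hk0 : (0:ℝ) < (k:ℝ) := by linarith
    apply one_div_le_one_div_of_le (by positivity)
    push_cast at h2 ⊢
    nlinarith
  have hsum : (1 / ((m:ℝ) + 1)) * ∑ k ∈ Finset.Icc 1 m, (1:ℝ) / (k:ℝ) ≤
      ∑ k ∈ Finset.Icc 1 m, (1:ℝ) / ((k:ℝ) * (((m:ℕ) + 1 : ℕ) - (k:ℝ))) := by
    rw [Finset.mul_sum]
    exact Finset.sum_le_sum hterm
  have hMn : M / (((m:ℕ) + 1 : ℕ) + 1 : ℝ) < M / ((m:ℝ) + 1) := by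
    push_cast
    exact div_lt_div_of_pos_left hM hnpos (by linarith)
  have hMS : M / ((m:ℝ) + 1) ≤ (1 / ((m:ℝ) + 1)) * ∑ k ∈ Finset.Icc 1 m, (1:ℝ) / (k:ℝ) := by
    rw [div_eq_mul_one_div M, mul_comm]
    exact mul_le_mul_of_nonneg_left hS (by positivity)
  have h2n : (0:ℝ) < 2 / (((m:ℕ) + 1 : ℕ) : ℝ) := by positivity
  simp only [Nat.add_sub_cancel]
  push_cast at hsum hMn h2n ⊢
  linarith
end
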